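/- arXiv:2406.00450 — 6 statements merged into one kernel-verified Lean document; each statement's English description precedes it below -/
import Mathlib

section
/- Let n, σ be real numbers with n > 0 and σ > 0, and let p, q be real numbers with p > 1 and q > 1. Set p' = p/(p−1), q' = q/(q−1), and define Γ_c(p,q) := (pq/(pq−1))·max{ 2σ + 4σ/p − (2n+2σ)/(p q') − (n+2σ)/p' , 4σ + 2σ/q − (2n+2σ)/q' − (n+2σ)/(p' q) }. Then Γ_c(p,q) > 0 if and only if max{ (2q+1)/(pq+q−2), (pq+p+1)/(2pq−p−1) } > n/(2σ). -/
/-! After clearing the conjugate exponents, each entry of the maximum in `Γ_c(p,q)` is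
`(2σ a - n d) / (pq)` with `a / d` the corresponding entry of the critical maximum and
`d > 0`, so its sign is that of `a / d - n / (2σ)`; the prefactor `pq/(pq-1)` is positive. -/

lemma div_lt_div_iff_pos_sub_div {a b c d e : ℝ} (hb : 0 < b) (hd : 0 < d) (he : 0 < e) :
    a / b < c / d ↔ 0 < (b * c - a * d) / e := by
  rw [div_lt_div_iff₀ hb hd, div_pos_iff_of_pos_right he, sub_pos, mul_comm b]

section Exponents

variable {n σ p q : ℝ}

lemma first_exponent_eq (hp₀ : p ≠ 0) (hq₀ : q ≠ 0) :
    2 * σ + 4 * σ / p - (2 * n + 2 * σ) / (p * (q / (q - 1))) - (n + 2 * σ) / (p / (p - 1))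
      = (2 * σ * (2 * q + 1) - n * (p * q + q - 2)) / (p * q) := by
  field_simp
  ring

lemma second_exponent_eq (hp₀ : p ≠ 0) (hq₀ : q ≠ 0) :
    4 * σ + 2 * σ / q - (2 * n + 2 * σ) / (q / (q - 1)) - (n + 2 * σ) / ((p / (p - 1)) * q)
      = (2 * σ * (p * q + p + 1) - n * (2 * p * q - p - 1)) / (p * q) := by
  field_simp
  ring

end Exponents

theorem stmt_4_general (n σ p q : ℝ) (hσ : 0 < σ) (hp : 1 < p) (hq : 1 < q) :
    (p * q / (p * q - 1)) *
        max (2 * σ + 4 * σ / p - (2 * n + 2 * σ) / (p * (q / (q - 1)))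
              - (n + 2 * σ) / (p / (p - 1)))
            (4 * σ + 2 * σ / q - (2 * n + 2 * σ) / (q / (q - 1))
              - (n + 2 * σ) / ((p / (p - 1)) * q)) > 0 ↔
      max ((2 * q + 1) / (p * q + q - 2)) ((p * q + p + 1) / (2 * p * q - p - 1))
        > n / (2 * σ) := by
  have hp₀ : 0 < p := by linarith
  have hq₀ : 0 < q := by linarith
  have hpq : 1 < p * q := by nlinarith
  have hσ₂ : 0 < 2 * σ := by linarith
  have hd₁ : 0 < p * q + q - 2 := by linarith
  have hd₂ : 0 < 2 * p * q - p - 1 := by nlinarith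
  have hc : 0 < p * q / (p * q - 1) := div_pos (by linarith) (by linarith)
  rw [gt_iff_lt, mul_pos_iff_of_pos_left hc,
    first_exponent_eq hp₀.ne' hq₀.ne',
    second_exponent_eq hp₀.ne' hq₀.ne',
    gt_iff_lt, lt_max_iff, lt_max_iff,
    div_lt_div_iff_pos_sub_div hσ₂ hd₁ (by linarith : 0 < p * q),
    div_lt_div_iff_pos_sub_div hσ₂ hd₂ (by linarith : 0 < p * q)]

/-- Positivity of the exponent `Γ_c(p,q)` from formula (∗) is equivalent to the
blow-up condition of Theorem 1.3 (case `n > σ`). Here `p' = p/(p−1)`, `q' = q/(q−1)`. -/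
theorem stmt_4 (n σ p q : ℝ) (hn : 0 < n) (hσ : 0 < σ) (hp : 1 < p) (hq : 1 < q) :
    (p * q / (p * q - 1)) *
        max (2 * σ + 4 * σ / p - (2 * n + 2 * σ) / (p * (q / (q - 1)))
              - (n + 2 * σ) / (p / (p - 1)))
            (4 * σ + 2 * σ / q - (2 * n + 2 * σ) / (q / (q - 1))
              - (n + 2 * σ) / ((p / (p - 1)) * q)) > 0 ↔
      max ((2 * q + 1) / (p * q + q - 2)) ((p * q + p + 1) / (2 * p * q - p - 1))
        > n / (2 * σ) :=
  stmt_4_general n σ p q hσ hp hq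
end

section
/- There exists a constant C > 0 such that for every real r > 0 with r ≠ 1/4, every t ≥ 0, and every pair of complex numbers λ₁ ≠ λ₂ with λ₁ + λ₂ = −1 and λ₁·λ₂ = r, one has √r · |(exp(λ₁ t) − exp(λ₂ t))/(λ₁ − λ₂)| ≤ C·(1+t)^{−1/2}. -/
/-!
The multiplier is the divided difference of `z ↦ exp (z * t)` at the two roots, which both lie
in the half-plane `re z ≤ -m` with `m = min r (1/2)`: a real root satisfies `l = -r - l²`, a
non-real one has real part `-1/2`. The mean value theorem on that half-plane bounds the
divided difference by `t e^{-mt}`, and the triangle inequality by `2 e^{-mt} / |λ₁ - λ₂|`,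
where `|λ₁ - λ₂|² = |1 - 4r|`. For small `r` the second bound and `√(r(1+t)) e^{-rt} ≲ 1`
give the decay; for `r` near `1/4`, where `λ₁ - λ₂` degenerates, the first bound does, since
then `m ≥ 1/8`; for large `r`, `|λ₁ - λ₂| ≥ √r` absorbs the factor `√r`.
-/

open Real Nat

theorem pow_mul_exp_neg_le_factorial {x : ℝ} (hx : 0 ≤ x) (n : ℕ) :
    x ^ n * exp (-x) ≤ n ! := by
  have := Real.pow_div_factorial_le_exp x hx n
  rw [div_le_iff₀ (by positivity)] at this
  calc x ^ n * exp (-x) ≤ exp x * n ! * exp (-x) := by gcongr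
    _ = n ! := by rw [mul_comm (exp x), mul_assoc, ← exp_add, add_neg_cancel, exp_zero, mul_one]

theorem sqrt_mul_sqrt_one_add_mul_exp_neg_le {r t : ℝ} (hr : 0 ≤ r) (hr₁ : r ≤ 1) (ht : 0 ≤ t) :
    √r * √(1 + t) * exp (-(r * t)) ≤ 3 := by
  have hsqrt : √r * √(1 + t) ≤ 2 + r * t := by
    rw [← sqrt_mul hr, sqrt_le_left (by positivity)]
    nlinarith [mul_nonneg hr ht]
  have hdecay := pow_mul_exp_neg_le_factorial (mul_nonneg hr ht) 1
  have hexp : exp (-(r * t)) ≤ 1 := exp_le_one_iff.mpr (by nlinarith [mul_nonneg hr ht])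
  rw [pow_one, factorial_one, cast_one] at hdecay
  calc √r * √(1 + t) * exp (-(r * t)) ≤ (2 + r * t) * exp (-(r * t)) := by gcongr
    _ ≤ 3 := by linarith

theorem sqrt_one_add_mul_exp_neg_half_le_one (t : ℝ) :
    √(1 + t) * exp (-(t / 2)) ≤ 1 := by
  have : √(1 + t) ≤ exp (t / 2) := by
    rw [sqrt_le_left (exp_nonneg _), ← exp_nat_mul, cast_ofNat, mul_div_cancel₀ _ two_ne_zero]
    linarith [add_one_le_exp t]
  calc √(1 + t) * exp (-(t / 2)) ≤ exp (t / 2) * exp (-(t / 2)) := by gcongr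
    _ = 1 := by rw [← exp_add, add_neg_cancel, exp_zero]

theorem sqrt_one_add_mul_mul_exp_neg_le {t : ℝ} (ht : 0 ≤ t) :
    √(1 + t) * t * exp (-(t / 8)) ≤ 136 := by
  have h₁ := pow_mul_exp_neg_le_factorial (x := t / 8) (by positivity) 1
  have h₂ := pow_mul_exp_neg_le_factorial (x := t / 8) (by positivity) 2
  norm_num at h₁ h₂
  have hsqrt : √(1 + t) ≤ 1 + t := by
    rw [sqrt_le_left (by positivity)]; nlinarith
  calc √(1 + t) * t * exp (-(t / 8)) ≤ (1 + t) * t * exp (-(t / 8)) := by gcongr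
    _ = 8 * (t / 8 * exp (-(t / 8))) + 64 * ((t / 8) ^ 2 * exp (-(t / 8))) := by ring
    _ ≤ 136 := by linarith

theorem sqrt_mul_div_mul_sqrt_one_add_le {r t D N : ℝ} (hr : 0 < r) (ht : 0 ≤ t) (hD : 0 < D)
    (hN : 0 ≤ N) (hD_sq : D ^ 2 = |1 - 4 * r|) (hN_short : N ≤ t * exp (-(min r (1 / 2) * t)) * D)
    (hN_long : N ≤ 2 * exp (-(min r (1 / 2) * t))) :
    √r * (N / D) * √(1 + t) ≤ 136 := by
  rcases le_or_gt r (1 / 8) with hr_small | hr_big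
  · have hm : min r (1 / 2) = r := min_eq_left (by linarith)
    have hD_half : 1 / 2 ≤ D := by
      rw [abs_of_nonneg (by linarith)] at hD_sq; nlinarith
    have hND : N / D ≤ 4 * exp (-(r * t)) := by
      rw [div_le_iff₀ hD, ← hm]; nlinarith [exp_pos (-(min r (1 / 2) * t))]
    calc √r * (N / D) * √(1 + t) ≤ √r * (4 * exp (-(r * t))) * √(1 + t) := by gcongr
      _ = 4 * (√r * √(1 + t) * exp (-(r * t))) := by ring
      _ ≤ 4 * 3 := by gcongr; exact sqrt_mul_sqrt_one_add_mul_exp_neg_le hr.le (by linarith) ht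
      _ ≤ 136 := by norm_num
  rcases le_or_gt r (1 / 2) with hr_mid | hr_large
  · have hND : N / D ≤ t * exp (-(t / 8)) := by
      rw [div_le_iff₀ hD]
      refine hN_short.trans (by gcongr; rw [min_eq_left hr_mid]; nlinarith)
    calc √r * (N / D) * √(1 + t) ≤ 1 * (t * exp (-(t / 8))) * √(1 + t) := by
          gcongr; exact Real.sqrt_le_one.mpr (by linarith)
      _ = √(1 + t) * t * exp (-(t / 8)) := by ring
      _ ≤ 136 := sqrt_one_add_mul_mul_exp_neg_le ht
  · have hm : min r (1 / 2) = 1 / 2 := min_eq_right hr_large.le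
    have hsqrt_r : √r ≤ D := by
      rw [sqrt_le_left hD.le, hD_sq, abs_of_nonpos (by linarith)]; linarith
    calc √r * (N / D) * √(1 + t) ≤ D * (N / D) * √(1 + t) := by gcongr
      _ = N * √(1 + t) := by field_simp
      _ ≤ 2 * exp (-(t / 2)) * √(1 + t) := by
          rw [hm, one_div, inv_mul_eq_div] at hN_long; gcongr
      _ = 2 * (√(1 + t) * exp (-(t / 2))) := by ring
      _ ≤ 136 := by linarith [sqrt_one_add_mul_exp_neg_half_le_one t]

section
variable {z₁ z₂ : ℂ} {m t : ℝ}

theorem norm_cexp_mul_sub_cexp_mul_le_mul_norm_sub (ht : 0 ≤ t) (h₁ : z₁.re ≤ -m)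
    (h₂ : z₂.re ≤ -m) :
    ‖Complex.exp (z₁ * t) - Complex.exp (z₂ * t)‖ ≤ t * Real.exp (-(m * t)) * ‖z₁ - z₂‖ := by
  refine (convex_halfSpace_re_le (-m)).norm_image_sub_le_of_norm_hasDerivWithin_le
    (f := fun z : ℂ ↦ Complex.exp (z * t)) (f' := fun z ↦ Complex.exp (z * t) * t)
    (fun z _ ↦ ((hasDerivAt_mul_const (t : ℂ)).cexp).hasDerivWithinAt) (fun z hz ↦ ?_) h₂ h₁
  rw [norm_mul, Complex.norm_exp, Complex.norm_real, Real.norm_of_nonneg ht, mul_comm]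
  gcongr
  simpa using mul_le_mul_of_nonneg_right (show z.re ≤ -m from hz) ht

theorem norm_cexp_mul_sub_cexp_mul_le_two_mul (ht : 0 ≤ t) (h₁ : z₁.re ≤ -m)
    (h₂ : z₂.re ≤ -m) :
    ‖Complex.exp (z₁ * t) - Complex.exp (z₂ * t)‖ ≤ 2 * Real.exp (-(m * t)) := by
  have hbound : ∀ z : ℂ, z.re ≤ -m → ‖Complex.exp (z * t)‖ ≤ Real.exp (-(m * t)) := fun z hz ↦ by
    rw [Complex.norm_exp]
    gcongr
    simpa using mul_le_mul_of_nonneg_right hz ht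
  linarith [norm_sub_le (Complex.exp (z₁ * t)) (Complex.exp (z₂ * t)), hbound z₁ h₁, hbound z₂ h₂]

end

theorem re_le_neg_min_of_sq_add_self_add_eq_zero {l : ℂ} {r : ℝ} (h : l ^ 2 + l + r = 0) :
    l.re ≤ -min r (1 / 2) := by
  have hre := congrArg Complex.re h
  have him := congrArg Complex.im h
  simp only [sq, Complex.add_re, Complex.mul_re, Complex.ofReal_re, Complex.zero_re,
    Complex.add_im, Complex.mul_im, Complex.ofReal_im, Complex.zero_im] at hre him
  rcases eq_or_ne l.im 0 with hreal | hcplx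
  · rw [hreal] at hre
    nlinarith [min_le_left r (1 / 2), sq_nonneg l.re]
  · have : l.re = -(1 / 2) := by
      have : (2 * l.re + 1) * l.im = 0 := by linarith
      linarith [(mul_eq_zero.mp this).resolve_right hcplx]
    linarith [min_le_right r (1 / 2)]

theorem norm_sub_sq_of_add_eq_neg_one_of_mul_eq {l₁ l₂ : ℂ} {r : ℝ} (hsum : l₁ + l₂ = -1)
    (hprod : l₁ * l₂ = r) : ‖l₁ - l₂‖ ^ 2 = |1 - 4 * r| := by
  have : (l₁ - l₂) ^ 2 = ((1 - 4 * r : ℝ) : ℂ) := by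
    push_cast; linear_combination (l₁ + l₂ - 1) * hsum - 4 * hprod
  rw [← norm_pow, this, Complex.norm_real, Real.norm_eq_abs]

/-- Uniform multiplier bound `√r·|(e^{λ₁t} − e^{λ₂t})/(λ₁ − λ₂)| ≤ C(1+t)^{−1/2}` for the
roots of `λ² + λ + r = 0`. -/
theorem stmt_11 :
    ∃ C : ℝ, 0 < C ∧
      ∀ r : ℝ, 0 < r → r ≠ 1 / 4 → ∀ t : ℝ, 0 ≤ t →
        ∀ l₁ l₂ : ℂ, l₁ ≠ l₂ → l₁ + l₂ = -1 → l₁ * l₂ = (r : ℂ) →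
          Real.sqrt r *
              ‖(Complex.exp (l₁ * t) - Complex.exp (l₂ * t)) / (l₁ - l₂)‖
            ≤ C * (1 + t) ^ (-(1 / 2) : ℝ) := by
  refine ⟨136, by norm_num, fun r hr _ t ht l₁ l₂ hne hsum hprod ↦ ?_⟩
  have hre₁ := re_le_neg_min_of_sq_add_self_add_eq_zero
    (by linear_combination l₁ * hsum - hprod : l₁ ^ 2 + l₁ + r = 0)
  have hre₂ := re_le_neg_min_of_sq_add_self_add_eq_zero
    (by linear_combination l₂ * hsum - hprod : l₂ ^ 2 + l₂ + r = 0)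
  have h1t : 0 < 1 + t := by linarith
  rw [norm_div, rpow_neg h1t.le, ← sqrt_eq_rpow, ← div_eq_mul_inv, le_div_iff₀ (sqrt_pos.mpr h1t)]
  exact sqrt_mul_div_mul_sqrt_one_add_le hr ht (norm_pos_iff.mpr (sub_ne_zero.mpr hne))
    (norm_nonneg _) (norm_sub_sq_of_add_eq_neg_one_of_mul_eq hsum hprod)
    (norm_cexp_mul_sub_cexp_mul_le_mul_norm_sub ht hre₁ hre₂)
    (norm_cexp_mul_sub_cexp_mul_le_two_mul ht hre₁ hre₂)
end

section
/- There exists a constant C > 0 such that for every real r > 0 with r ≠ 1/4, every t ≥ 0, and every pair of complex numbers λ₁ ≠ λ₂ with λ₁ + λ₂ = −1 and λ₁·λ₂ = r, one has |(λ₁·exp(λ₁ t) − λ₂·exp(λ₂ t))/(λ₁ − λ₂)| ≤ C. -/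
/-!
The quotient is `v'(t)` for the solution `v(t) = (e^{λ₁t} − e^{λ₂t})/(λ₁ − λ₂)` of
`v'' + v' + r v = 0` with `v(0) = 0`, `v'(0) = 1`. Along any solution of a damped oscillator the
energy `|v'|² + r|v|²` is nonincreasing, so for `r ≥ 0` we get `|v'(t)|² ≤ |v'(0)|² = 1`; the
constant is `C = 1`.
-/

open Complex

section DampedOscillator

variable {E : Type*} [NormedAddCommGroup E] [InnerProductSpace ℝ E] {γ r : ℝ} {v v' : ℝ → E}

theorem hasDerivAt_dampedEnergy (hv : ∀ t, HasDerivAt v (v' t) t)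
    (hv' : ∀ t, HasDerivAt v' (-(γ • v' t) - r • v t) t) (t : ℝ) :
    HasDerivAt (fun s ↦ ‖v' s‖ ^ 2 + r * ‖v s‖ ^ 2) (-(2 * γ * ‖v' t‖ ^ 2)) t := by
  refine ((hv' t).norm_sq.add ((hv t).norm_sq.const_mul r)).congr_deriv ?_
  simp only [inner_sub_right, inner_neg_right, inner_smul_right, real_inner_self_eq_norm_sq,
    real_inner_comm (v t)]
  ring

theorem antitone_dampedEnergy (hγ : 0 ≤ γ) (hv : ∀ t, HasDerivAt v (v' t) t)
    (hv' : ∀ t, HasDerivAt v' (-(γ • v' t) - r • v t) t) :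
    Antitone fun s ↦ ‖v' s‖ ^ 2 + r * ‖v s‖ ^ 2 :=
  antitone_of_hasDerivAt_nonpos (hasDerivAt_dampedEnergy hv hv') fun t ↦
    neg_nonpos.mpr (by positivity)

theorem sq_norm_deriv_le_of_damped (hγ : 0 ≤ γ) (hr : 0 ≤ r) (hv : ∀ t, HasDerivAt v (v' t) t)
    (hv' : ∀ t, HasDerivAt v' (-(γ • v' t) - r • v t) t) {t : ℝ} (ht : 0 ≤ t) :
    ‖v' t‖ ^ 2 ≤ ‖v' 0‖ ^ 2 + r * ‖v 0‖ ^ 2 :=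
  calc ‖v' t‖ ^ 2 ≤ ‖v' t‖ ^ 2 + r * ‖v t‖ ^ 2 := le_add_of_nonneg_right (by positivity)
    _ ≤ ‖v' 0‖ ^ 2 + r * ‖v 0‖ ^ 2 := antitone_dampedEnergy hγ hv hv' ht

end DampedOscillator

theorem hasDerivAt_cexp_mul_ofReal (l : ℂ) (t : ℝ) :
    HasDerivAt (fun s : ℝ ↦ cexp (l * s)) (l * cexp (l * t)) t := by
  simpa [mul_comm] using (((hasDerivAt_id t).ofReal_comp).const_mul l).cexp

theorem norm_div_sub_le_one_of_damped_roots {l₁ l₂ : ℂ} {γ r : ℝ} (hne : l₁ ≠ l₂)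
    (hsum : l₁ + l₂ = -γ) (hprod : l₁ * l₂ = r) (hγ : 0 ≤ γ) (hr : 0 ≤ r) {t : ℝ}
    (ht : 0 ≤ t) :
    ‖(l₁ * cexp (l₁ * t) - l₂ * cexp (l₂ * t)) / (l₁ - l₂)‖ ≤ 1 := by
  have hsub : l₁ - l₂ ≠ 0 := sub_ne_zero.mpr hne
  have hv : ∀ s : ℝ, HasDerivAt (fun s : ℝ ↦ (cexp (l₁ * s) - cexp (l₂ * s)) / (l₁ - l₂))
      ((l₁ * cexp (l₁ * s) - l₂ * cexp (l₂ * s)) / (l₁ - l₂)) s := fun s ↦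
    ((hasDerivAt_cexp_mul_ofReal l₁ s).sub (hasDerivAt_cexp_mul_ofReal l₂ s)).div_const _
  -- Each root satisfies `l² = (l₁ + l₂) l − l₁ l₂`.
  have hv' : ∀ s : ℝ,
      HasDerivAt (fun s : ℝ ↦ (l₁ * cexp (l₁ * s) - l₂ * cexp (l₂ * s)) / (l₁ - l₂))
      (-(γ • ((l₁ * cexp (l₁ * s) - l₂ * cexp (l₂ * s)) / (l₁ - l₂)))
        - r • ((cexp (l₁ * s) - cexp (l₂ * s)) / (l₁ - l₂))) s := fun s ↦ by
    refine (((hasDerivAt_cexp_mul_ofReal l₁ s).const_mul l₁).sub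
      ((hasDerivAt_cexp_mul_ofReal l₂ s).const_mul l₂)).div_const (l₁ - l₂) |>.congr_deriv ?_
    simp only [real_smul]
    linear_combination ((l₁ * cexp (l₁ * s) - l₂ * cexp (l₂ * s)) * hsum
      - (cexp (l₁ * s) - cexp (l₂ * s)) * hprod) / (l₁ - l₂)
  have hsq := sq_norm_deriv_le_of_damped hγ hr hv hv' ht
  simp only [ofReal_zero, mul_zero, Complex.exp_zero, mul_one, sub_self, zero_div, norm_zero,
    div_self hsub, norm_one, one_pow, zero_pow two_ne_zero, add_zero] at hsq
  exact (sq_le_one_iff₀ (norm_nonneg _)).mp hsq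

/-- Uniform bound `|(λ₁e^{λ₁t} − λ₂e^{λ₂t})/(λ₁ − λ₂)| ≤ C` for the roots of
`λ² + λ + r = 0`. -/
theorem stmt_12 :
    ∃ C : ℝ, 0 < C ∧
      ∀ r : ℝ, 0 < r → r ≠ 1 / 4 → ∀ t : ℝ, 0 ≤ t →
        ∀ l₁ l₂ : ℂ, l₁ ≠ l₂ → l₁ + l₂ = -1 → l₁ * l₂ = (r : ℂ) →
          ‖(l₁ * Complex.exp (l₁ * t) - l₂ * Complex.exp (l₂ * t)) / (l₁ - l₂)‖
            ≤ C :=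
  ⟨1, one_pos, fun _ hr _ _ ht _ _ hne hsum hprod ↦
    norm_div_sub_le_one_of_damped_roots (γ := 1) hne (by simpa using hsum) hprod zero_le_one
      hr.le ht⟩
end

section
/- There exists a constant C > 0 such that for every real r > 0 with r ≠ 4, every t ≥ 0, and every pair of complex numbers λ₁ ≠ λ₂ with λ₁ + λ₂ = −r and λ₁·λ₂ = r, one has √r · |(exp(λ₁ t) − exp(λ₂ t))/(λ₁ − λ₂)| ≤ C. -/
/-!
Both roots satisfy `Re λ ≤ -min 1 (r/2)`, and `|λ₁ - λ₂|² = r |r - 4|`. Away from the double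
root (`|r - 4| ≥ 1`) this gives `|λ₁ - λ₂| ≥ √r`, and the numerator is at most `2`. Near `r = 4`
both real parts are `≤ -1`, so the mean value inequality for `exp` on the half-plane
`Re z ≤ -t` bounds the divided difference by `t e^{-t} ≤ 1`, while `√r ≤ 3`.
-/

open Complex

theorem Complex.norm_exp_sub_exp_le_of_re_le {z w : ℂ} {c : ℝ} (hz : z.re ≤ c) (hw : w.re ≤ c) :
    ‖exp z - exp w‖ ≤ Real.exp c * ‖z - w‖ :=
  (convex_halfSpace_re_le c).norm_image_sub_le_of_norm_deriv_le
    (fun _ _ => differentiableAt_exp)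
    (fun u hu => by rw [deriv_exp, norm_exp]; exact Real.exp_le_exp.mpr hu) hw hz

theorem Complex.norm_exp_mul_sub_exp_mul_le_two {l₁ l₂ : ℂ} {t : ℝ} (ht : 0 ≤ t)
    (h₁ : l₁.re ≤ 0) (h₂ : l₂.re ≤ 0) : ‖exp (l₁ * t) - exp (l₂ * t)‖ ≤ 2 := by
  have h : ∀ l : ℂ, l.re ≤ 0 → ‖exp (l * t)‖ ≤ 1 := fun l hl => by
    rw [norm_exp, Real.exp_le_one_iff, re_mul_ofReal]
    exact mul_nonpos_of_nonpos_of_nonneg hl ht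
  linarith [norm_sub_le (exp (l₁ * t)) (exp (l₂ * t)), h l₁ h₁, h l₂ h₂]

theorem Complex.norm_exp_mul_sub_exp_mul_div_le {l₁ l₂ : ℂ} {c t : ℝ} (ht : 0 ≤ t)
    (h₁ : l₁.re ≤ -c) (h₂ : l₂.re ≤ -c) :
    ‖(exp (l₁ * t) - exp (l₂ * t)) / (l₁ - l₂)‖ ≤ t * Real.exp (-c * t) := by
  have hre : ∀ l : ℂ, l.re ≤ -c → (l * t).re ≤ -c * t := fun l hl => by
    rw [re_mul_ofReal]; exact mul_le_mul_of_nonneg_right hl ht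
  rw [norm_div]
  refine div_le_of_le_mul₀ (norm_nonneg _) (by positivity) ?_
  calc ‖exp (l₁ * t) - exp (l₂ * t)‖
      ≤ Real.exp (-c * t) * ‖l₁ * t - l₂ * t‖ :=
        norm_exp_sub_exp_le_of_re_le (hre l₁ h₁) (hre l₂ h₂)
    _ = t * Real.exp (-c * t) * ‖l₁ - l₂‖ := by
        rw [← sub_mul, norm_mul, norm_real, Real.norm_of_nonneg ht]; ring

/-- Writing `λ = x + iy`, the imaginary part of `λ² + rλ + r = 0` reads `y (2x + r) = 0`: either
`x = -r/2`, or `λ` is real and then `r (x + 1) = -x² ≤ 0`. -/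
theorem re_le_of_sq_add_mul_add_eq_zero {r : ℝ} (hr : 0 < r) {l : ℂ}
    (h : l ^ 2 + r * l + r = 0) : l.re ≤ -min 1 (r / 2) := by
  have hre : l.re ^ 2 - l.im ^ 2 + r * l.re + r = 0 := by
    simpa [sq] using congrArg re h
  have him : l.im * (2 * l.re + r) = 0 := by
    have := congrArg im h
    simp only [sq, add_im, mul_im, ofReal_re, ofReal_im, zero_im] at this
    linear_combination this
  rcases mul_eq_zero.mp him with hy | hx
  · have : l.re ≤ -1 := by rw [hy] at hre; nlinarith [sq_nonneg l.re]
    linarith [min_le_left 1 (r / 2)]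
  · linarith [min_le_right 1 (r / 2)]

theorem norm_sub_sq_of_add_eq_of_mul_eq {r : ℝ} (hr : 0 < r) {l₁ l₂ : ℂ}
    (hsum : l₁ + l₂ = -(r : ℂ)) (hmul : l₁ * l₂ = (r : ℂ)) :
    ‖l₁ - l₂‖ ^ 2 = r * |r - 4| := by
  have hdisc : (l₁ - l₂) ^ 2 = ((r * (r - 4) : ℝ) : ℂ) := by
    push_cast
    linear_combination (l₁ + l₂ - r) * hsum - 4 * hmul
  rw [← norm_pow, hdisc, norm_real, Real.norm_eq_abs, abs_mul, abs_of_pos hr]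

/-- Uniform multiplier bound `√r·|(e^{λ₁t} − e^{λ₂t})/(λ₁ − λ₂)| ≤ C` for the roots of
`λ² + rλ + r = 0`. -/
theorem stmt_13 :
    ∃ C : ℝ, 0 < C ∧
      ∀ r : ℝ, 0 < r → r ≠ 4 → ∀ t : ℝ, 0 ≤ t →
        ∀ l₁ l₂ : ℂ, l₁ ≠ l₂ → l₁ + l₂ = -(r : ℂ) → l₁ * l₂ = (r : ℂ) →
          Real.sqrt r *
              ‖(Complex.exp (l₁ * t) - Complex.exp (l₂ * t)) / (l₁ - l₂)‖
            ≤ C := by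
  refine ⟨3, by norm_num, fun r hr _ t ht l₁ l₂ _ hsum hmul => ?_⟩
  have hre₁ : l₁.re ≤ -min 1 (r / 2) :=
    re_le_of_sq_add_mul_add_eq_zero hr (by linear_combination l₁ * hsum - hmul)
  have hre₂ : l₂.re ≤ -min 1 (r / 2) :=
    re_le_of_sq_add_mul_add_eq_zero hr (by linear_combination l₂ * hsum - hmul)
  rcases le_or_gt 1 |r - 4| with hfar | hnear
  · have hsqrt : Real.sqrt r ≤ ‖l₁ - l₂‖ := Real.sqrt_le_iff.mpr
      ⟨norm_nonneg _, by nlinarith [norm_sub_sq_of_add_eq_of_mul_eq hr hsum hmul]⟩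
    have hmin : 0 ≤ min 1 (r / 2) := le_min zero_le_one (by positivity)
    have hnum : ‖exp (l₁ * t) - exp (l₂ * t)‖ ≤ 2 :=
      norm_exp_mul_sub_exp_mul_le_two ht (by linarith) (by linarith)
    rw [norm_div, mul_div_assoc', div_le_iff₀ ((Real.sqrt_pos.mpr hr).trans_le hsqrt)]
    nlinarith [Real.sqrt_nonneg r, norm_nonneg (exp (l₁ * t) - exp (l₂ * t))]
  · obtain ⟨hr3, hr5⟩ := abs_lt.mp hnear
    rw [min_eq_left (by linarith)] at hre₁ hre₂
    calc Real.sqrt r * ‖(exp (l₁ * t) - exp (l₂ * t)) / (l₁ - l₂)‖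
        ≤ 3 * (t * Real.exp (-1 * t)) := by
          gcongr
          · exact Real.sqrt_le_iff.mpr ⟨by norm_num, by linarith⟩
          · exact norm_exp_mul_sub_exp_mul_div_le ht hre₁ hre₂
      _ ≤ 3 * 1 := by
          gcongr
          rw [neg_one_mul]
          exact (Real.mul_exp_neg_le_exp_neg_one t).trans (Real.exp_le_one_iff.mpr (by norm_num))
      _ = 3 := mul_one 3
end

section
/- There exists a constant C > 0 such that for every real r > 0 with r ≠ 4, every t ≥ 0, and every pair of complex numbers λ₁ ≠ λ₂ with λ₁ + λ₂ = −r and λ₁·λ₂ = r, one has |(λ₁·exp(λ₁ t) − λ₂·exp(λ₂ t))/(λ₁ − λ₂)| ≤ C. -/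
/-!
Since `(l₁ - l₂)² = r² - 4r`, the roots are either real and negative (`r > 4`) or complex
conjugate with real part `-r/2` (`r < 4`). In the real case the quotient is a divided difference
of `x ↦ x e^{xt}`, whose derivative `e^{xt}(1 + xt)` has absolute value at most `1` for `x ≤ 0`.
In the complex case the quotient equals
`-(r/2)·(e^{l₁t} - e^{l₂t})/(l₁ - l₂) + (e^{l₁t} + e^{l₂t})/2`; by the mean value inequality
on the line `re z = -r/2` the first term is at most `(rt/2) e^{-rt/2} ≤ 1`, the second at most `1`.
-/

open Complex

lemma Real.abs_exp_mul_one_add_le_one {s : ℝ} (hs : s ≤ 0) : |Real.exp s * (1 + s)| ≤ 1 := by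
  have hdecay : -s * Real.exp s ≤ 1 := by
    simpa using
      (Real.mul_exp_neg_le_exp_neg_one (-s)).trans (Real.exp_le_one_iff.mpr (by norm_num))
  have hexp : Real.exp s ≤ 1 := Real.exp_le_one_iff.mpr hs
  rw [abs_le]
  constructor <;> nlinarith [Real.exp_pos s]

lemma Real.abs_mul_exp_mul_sub_le {a b t : ℝ} (ht : 0 ≤ t) (ha : a ≤ 0) (hb : b ≤ 0) :
    |a * Real.exp (a * t) - b * Real.exp (b * t)| ≤ |a - b| := by
  have hderiv (x : ℝ) : HasDerivAt (fun x => x * Real.exp (x * t))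
      (Real.exp (x * t) * (1 + x * t)) x :=
    ((hasDerivAt_id' x).mul (hasDerivAt_mul_const t).exp).congr_deriv (by ring)
  simpa using (convex_Iic (0 : ℝ)).norm_image_sub_le_of_norm_hasDerivWithin_le
    (fun x _ => (hderiv x).hasDerivWithinAt)
    (fun x hx => Real.abs_exp_mul_one_add_le_one (mul_nonpos_of_nonpos_of_nonneg hx ht))
    (Set.mem_Iic.mpr hb) (Set.mem_Iic.mpr ha)

lemma Complex.norm_exp_mul_sub_exp_mul_le {z w : ℂ} {c t : ℝ} (ht : 0 ≤ t)
    (hz : z.re ≤ c) (hw : w.re ≤ c) :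
    ‖exp (z * t) - exp (w * t)‖ ≤ t * Real.exp (c * t) * ‖z - w‖ := by
  have hderiv (x : ℂ) : HasDerivAt (fun x => exp (x * t)) (t * exp (x * t)) x :=
    (hasDerivAt_mul_const (t : ℂ)).cexp.congr_deriv (mul_comm _ _)
  refine (convex_halfSpace_re_le c).norm_image_sub_le_of_norm_hasDerivWithin_le
    (fun x _ => (hderiv x).hasDerivWithinAt) (fun x hx => ?_) hw hz
  rw [norm_mul, norm_exp, Complex.norm_real, Real.norm_of_nonneg ht, re_mul_ofReal]
  gcongr
  exact hx

lemma Complex.re_eq_zero_of_sq_eq_ofReal_neg {w : ℂ} {x : ℝ} (h : w ^ 2 = x) (hx : x < 0) :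
    w.re = 0 := by
  have hre : w.re * w.re - w.im * w.im = x := by simpa [sq] using congrArg re h
  have him : w.re * w.im + w.im * w.re = 0 := by simpa [sq] using congrArg im h
  by_contra hw
  have : w.im = 0 := by
    rcases mul_eq_zero.mp (by linarith : w.re * w.im = 0) with h' | h'
    exacts [absurd h' hw, h']
  nlinarith

lemma Complex.im_eq_zero_of_sq_eq_ofReal_nonneg {w : ℂ} {x : ℝ} (h : w ^ 2 = x) (hx : 0 ≤ x) :
    w.im = 0 := by
  have hre : w.re * w.re - w.im * w.im = x := by simpa [sq] using congrArg re h
  have him : w.re * w.im + w.im * w.re = 0 := by simpa [sq] using congrArg im h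
  by_contra hw
  have : w.re = 0 := by
    rcases mul_eq_zero.mp (by linarith : w.re * w.im = 0) with h' | h'
    exacts [h', absurd h' hw]
  have : 0 < w.im * w.im := mul_self_pos.mpr hw
  nlinarith

lemma Complex.norm_slope_mul_exp_ofReal_le_one {a b t : ℝ} (ht : 0 ≤ t) (ha : a ≤ 0)
    (hb : b ≤ 0) : ‖((a : ℂ) * exp (a * t) - b * exp (b * t)) / (a - b)‖ ≤ 1 := by
  have h := div_le_one_of_le₀ (Real.abs_mul_exp_mul_sub_le ht ha hb) (abs_nonneg _)
  rw [← abs_div, ← Real.norm_eq_abs, ← norm_real] at h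
  exact_mod_cast h

lemma Complex.norm_slope_mul_exp_le_two {l₁ l₂ : ℂ} {r t : ℝ} (hr : 0 ≤ r) (ht : 0 ≤ t)
    (hsum : l₁ + l₂ = -r) (h₁ : l₁.re ≤ -r / 2) (h₂ : l₂.re ≤ -r / 2) :
    ‖(l₁ * exp (l₁ * t) - l₂ * exp (l₂ * t)) / (l₁ - l₂)‖ ≤ 2 := by
  rcases eq_or_ne l₁ l₂ with rfl | hne
  · simp
  set e₁ := exp (l₁ * t)
  set e₂ := exp (l₂ * t)
  set E := Real.exp (-r / 2 * t)
  have hsplit : (l₁ * e₁ - l₂ * e₂) / (l₁ - l₂)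
      = -(r : ℂ) / 2 * ((e₁ - e₂) / (l₁ - l₂)) + (e₁ + e₂) / 2 := by
    field_simp [sub_ne_zero.mpr hne]
    linear_combination (e₁ - e₂) * hsum
  have hslope : ‖(e₁ - e₂) / (l₁ - l₂)‖ ≤ t * E := by
    rw [norm_div, div_le_iff₀ (norm_pos_iff.mpr (sub_ne_zero.mpr hne))]
    exact norm_exp_mul_sub_exp_mul_le ht h₁ h₂
  have hnorm {l : ℂ} (hl : l.re ≤ -r / 2) : ‖exp (l * t)‖ ≤ E := by
    rw [norm_exp, re_mul_ofReal]
    exact Real.exp_le_exp.mpr (mul_le_mul_of_nonneg_right hl ht)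
  have hE : E ≤ 1 := Real.exp_le_one_iff.mpr (by nlinarith)
  have hdecay : r / 2 * t * E ≤ 1 := by
    have := Real.mul_exp_neg_le_exp_neg_one (r / 2 * t)
    rw [show -(r / 2 * t) = -r / 2 * t by ring] at this
    linarith [Real.exp_le_one_iff.mpr (show (-1 : ℝ) ≤ 0 by norm_num)]
  calc ‖(l₁ * e₁ - l₂ * e₂) / (l₁ - l₂)‖
      ≤ r / 2 * ‖(e₁ - e₂) / (l₁ - l₂)‖ + (‖e₁‖ + ‖e₂‖) / 2 := by
        rw [hsplit]
        refine (norm_add_le _ _).trans (add_le_add (le_of_eq ?_) ?_)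
        · rw [norm_mul, norm_div, norm_neg, norm_real, Real.norm_of_nonneg hr, RCLike.norm_ofNat]
        · rw [norm_div, RCLike.norm_ofNat]
          gcongr
          exact norm_add_le _ _
    _ ≤ r / 2 * (t * E) + (E + E) / 2 := by gcongr <;> exact hnorm ‹_›
    _ ≤ 2 := by nlinarith

/-- Uniform bound `|(λ₁e^{λ₁t} − λ₂e^{λ₂t})/(λ₁ − λ₂)| ≤ C` for the roots of
`λ² + rλ + r = 0`. -/
theorem stmt_14 :
    ∃ C : ℝ, 0 < C ∧
      ∀ r : ℝ, 0 < r → r ≠ 4 → ∀ t : ℝ, 0 ≤ t →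
        ∀ l₁ l₂ : ℂ, l₁ ≠ l₂ → l₁ + l₂ = -(r : ℂ) → l₁ * l₂ = (r : ℂ) →
          ‖(l₁ * Complex.exp (l₁ * t) - l₂ * Complex.exp (l₂ * t)) / (l₁ - l₂)‖
            ≤ C := by
  refine ⟨2, two_pos, fun r hr hr4 t ht l₁ l₂ _ hsum hprod => ?_⟩
  have hdisc : (l₁ - l₂) ^ 2 = ((r ^ 2 - 4 * r : ℝ) : ℂ) := by
    push_cast
    linear_combination (l₁ + l₂ - r) * hsum - 4 * hprod
  have hsum_re : l₁.re + l₂.re = -r := by simpa using congrArg re hsum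
  have hsum_im : l₁.im + l₂.im = 0 := by simpa using congrArg im hsum
  rcases hr4.lt_or_gt with hlt | hgt
  · have hre : l₁.re - l₂.re = 0 := by
      simpa using re_eq_zero_of_sq_eq_ofReal_neg hdisc (by nlinarith)
    exact norm_slope_mul_exp_le_two hr.le ht hsum (by linarith) (by linarith)
  · have him : l₁.im - l₂.im = 0 := by
      simpa using im_eq_zero_of_sq_eq_ofReal_nonneg hdisc (by nlinarith)
    lift l₁ to ℝ using (by linarith) with a
    lift l₂ to ℝ using (by linarith) with b
    have hsum_ab : a + b = -r := by exact_mod_cast hsum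
    have hprod_ab : a * b = r := by exact_mod_cast hprod
    obtain ⟨ha, hb⟩ : a < 0 ∧ b < 0 :=
      (pos_and_pos_or_neg_and_neg_of_mul_pos (hprod_ab ▸ hr)).resolve_left
        fun h => by linarith [h.1, h.2]
    exact (norm_slope_mul_exp_ofReal_le_one ht ha.le hb.le).trans one_le_two
end

section
/- Let n and γ be positive integers and let r > n be a real number. Define f : ℝⁿ → ℝ by f(x) = (1+|x|²)^{−r/2}, and let Δ denote the Laplace operator on ℝⁿ (the sum of the second partial derivatives along an orthonormal basis). Then there exists a constant C > 0 such that for all x ∈ ℝⁿ, |Δ^γ f(x)| ≤ C·(1+|x|²)^{−(r+2γ)/2}, where Δ^γ denotes the γ-fold iterate of Δ. -/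
/-!
Write `g_a(x) = (1 + ‖x‖²)^a`. A direct computation gives
`Δ g_a = (2an + 4a(a-1)) g_{a-1} - 4a(a-1) g_{a-2}`, so the Laplacian maps the span of the `g_a`
with `a ≤ b` into the span of those with `a ≤ b - 1`. Hence `Δ^γ g_{-r/2}` is a finite linear
combination of `g_a` with `a ≤ -r/2 - γ`, and each of these is at most `g_{-r/2-γ}` since
`1 + ‖x‖² ≥ 1`.
-/

/-- The Laplace operator on `ℝⁿ`: the sum of the second partial derivatives along the
standard orthonormal basis of `EuclideanSpace ℝ (Fin n)`. -/
noncomputable def laplaceOp (n : ℕ) (f : EuclideanSpace ℝ (Fin n) → ℝ) :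
    EuclideanSpace ℝ (Fin n) → ℝ := fun x =>
  ∑ i : Fin n,
    iteratedFDeriv ℝ 2 f x ![EuclideanSpace.single i (1 : ℝ), EuclideanSpace.single i (1 : ℝ)]

open Submodule

noncomputable def oneAddNormSqRpow {E : Type*} [SeminormedAddCommGroup E] (a : ℝ) (x : E) : ℝ :=
  (1 + ‖x‖ ^ 2) ^ a

section Seminormed

variable {E : Type*} [SeminormedAddCommGroup E]

lemma one_add_norm_sq_pos (x : E) : 0 < 1 + ‖x‖ ^ 2 := by
  positivity

lemma oneAddNormSqRpow_nonneg (a : ℝ) (x : E) : 0 ≤ oneAddNormSqRpow a x :=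
  Real.rpow_nonneg (one_add_norm_sq_pos x).le a

lemma abs_oneAddNormSqRpow_le {a b : ℝ} (hab : a ≤ b) (x : E) :
    |oneAddNormSqRpow a x| ≤ oneAddNormSqRpow b x := by
  rw [abs_of_nonneg (oneAddNormSqRpow_nonneg a x)]
  exact Real.rpow_le_rpow_of_exponent_le (le_add_of_nonneg_right (sq_nonneg _)) hab

variable (E) in
noncomputable def oneAddNormSqRpowSpan (b : ℝ) : Submodule ℝ (E → ℝ) :=
  span ℝ (oneAddNormSqRpow '' Set.Iic b)

lemma exists_abs_le_of_mem_oneAddNormSqRpowSpan {b : ℝ} {f : E → ℝ}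
    (hf : f ∈ oneAddNormSqRpowSpan E b) : ∃ C > 0, ∀ x, |f x| ≤ C * oneAddNormSqRpow b x := by
  induction hf using span_induction with
  | mem _ hg =>
    obtain ⟨a, ha, rfl⟩ := hg
    exact ⟨1, one_pos, fun x => by simpa using abs_oneAddNormSqRpow_le ha x⟩
  | zero => exact ⟨1, one_pos, fun x => by simpa using oneAddNormSqRpow_nonneg b x⟩
  | add f g _ _ hf hg =>
    obtain ⟨C, hC, hfC⟩ := hf
    obtain ⟨D, hD, hgD⟩ := hg
    refine ⟨C + D, add_pos hC hD, fun x => ?_⟩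
    calc |f x + g x| ≤ |f x| + |g x| := abs_add_le _ _
      _ ≤ C * oneAddNormSqRpow b x + D * oneAddNormSqRpow b x := add_le_add (hfC x) (hgD x)
      _ = (C + D) * oneAddNormSqRpow b x := by ring
  | smul c f _ hf =>
    obtain ⟨C, hC, hfC⟩ := hf
    refine ⟨(|c| + 1) * C, by positivity, fun x => ?_⟩
    calc |c * f x| = |c| * |f x| := abs_mul _ _
      _ ≤ (|c| + 1) * (C * oneAddNormSqRpow b x) :=
        mul_le_mul (le_add_of_nonneg_right zero_le_one) (hfC x) (abs_nonneg _) (by positivity)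
      _ = (|c| + 1) * C * oneAddNormSqRpow b x := by ring

end Seminormed

section InnerProductSpace

variable {E : Type*} [NormedAddCommGroup E] [InnerProductSpace ℝ E]

lemma contDiff_oneAddNormSqRpow {m : WithTop ℕ∞} (a : ℝ) :
    ContDiff ℝ m (oneAddNormSqRpow a : E → ℝ) :=
  (contDiff_const.add (contDiff_norm_sq ℝ)).rpow_const_of_ne fun x =>
    (one_add_norm_sq_pos x).ne'

lemma hasFDerivAt_oneAddNormSqRpow (a : ℝ) (x : E) :
    HasFDerivAt (oneAddNormSqRpow a)
      ((2 * a * oneAddNormSqRpow (a - 1) x) • innerSL ℝ x) x := by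
  have hbase : HasFDerivAt (fun y : E => 1 + ‖y‖ ^ 2) ((2 : ℕ) • innerSL ℝ x) x :=
    (hasStrictFDerivAt_norm_sq x).hasFDerivAt.const_add 1
  have hpow := (Real.hasDerivAt_rpow_const (p := a)
    (Or.inl (one_add_norm_sq_pos x).ne')).comp_hasFDerivAt x hbase
  refine hpow.congr_fderiv ?_
  ext v
  simp only [oneAddNormSqRpow, smul_apply, innerSL_apply_apply, smul_eq_mul,
    nsmul_eq_mul, Nat.cast_ofNat]
  ring

lemma fderiv_oneAddNormSqRpow (a : ℝ) :
    fderiv ℝ (oneAddNormSqRpow a : E → ℝ) =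
      fun x => (2 * a * oneAddNormSqRpow (a - 1) x) • innerSL ℝ x :=
  funext fun x => (hasFDerivAt_oneAddNormSqRpow a x).fderiv

lemma iteratedFDeriv_two_oneAddNormSqRpow_apply (a : ℝ) (x v w : E) :
    iteratedFDeriv ℝ 2 (oneAddNormSqRpow a) x ![v, w] =
      2 * a * oneAddNormSqRpow (a - 1) x * inner ℝ v w
        + 4 * a * (a - 1) * oneAddNormSqRpow (a - 2) x * inner ℝ x v * inner ℝ x w := by
  have hcoeff := (hasFDerivAt_oneAddNormSqRpow (a - 1) x).const_mul (2 * a)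
  have hgrad : HasFDerivAt (fun y => (2 * a * oneAddNormSqRpow (a - 1) y) • innerSL ℝ y) _ x :=
    hcoeff.smul (innerSL ℝ).hasFDerivAt
  rw [iteratedFDeriv_two_apply, fderiv_oneAddNormSqRpow, hgrad.fderiv,
    show a - 1 - 1 = a - 2 by ring]
  simp only [add_apply, smul_apply, ContinuousLinearMap.smulRight_apply, innerSL_apply_apply,
    smul_eq_mul, Matrix.cons_val_zero, Matrix.cons_val_one]
  erw [innerSL_apply_apply]
  ring

lemma contDiff_of_mem_oneAddNormSqRpowSpan {m : WithTop ℕ∞} {b : ℝ} {f : E → ℝ}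
    (hf : f ∈ oneAddNormSqRpowSpan E b) : ContDiff ℝ m f := by
  induction hf using span_induction with
  | mem _ hg => obtain ⟨a, -, rfl⟩ := hg; exact contDiff_oneAddNormSqRpow a
  | zero => exact contDiff_const
  | add _ _ _ _ hf hg => exact hf.add hg
  | smul c _ _ hf => exact hf.const_smul c

end InnerProductSpace

section Laplacian

variable {n : ℕ}

lemma laplaceOp_zero : laplaceOp n 0 = 0 := by
  ext x
  simp [laplaceOp]

lemma laplaceOp_add {f g : EuclideanSpace ℝ (Fin n) → ℝ} (hf : ContDiff ℝ 2 f)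
    (hg : ContDiff ℝ 2 g) : laplaceOp n (f + g) = laplaceOp n f + laplaceOp n g := by
  ext x
  simp only [laplaceOp, iteratedFDeriv_add hf hg, Pi.add_apply,
    add_apply, Finset.sum_add_distrib]

lemma laplaceOp_const_smul (c : ℝ) {f : EuclideanSpace ℝ (Fin n) → ℝ}
    (hf : ContDiff ℝ 2 f) : laplaceOp n (c • f) = c • laplaceOp n f := by
  ext x
  simp only [laplaceOp, iteratedFDeriv_const_smul_apply hf.contDiffAt, Pi.smul_apply,
    smul_apply, smul_eq_mul, Finset.mul_sum]

lemma laplaceOp_oneAddNormSqRpow (a : ℝ) :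
    laplaceOp n (oneAddNormSqRpow a) =
      (2 * a * n + 4 * a * (a - 1)) • oneAddNormSqRpow (a - 1)
        - (4 * a * (a - 1)) • oneAddNormSqRpow (a - 2) := by
  ext x
  have hterm : ∀ i, iteratedFDeriv ℝ 2 (oneAddNormSqRpow a) x
      ![EuclideanSpace.single i (1 : ℝ), EuclideanSpace.single i 1] =
        2 * a * oneAddNormSqRpow (a - 1) x
          + 4 * a * (a - 1) * oneAddNormSqRpow (a - 2) x * x i ^ 2 := by
    intro i
    rw [iteratedFDeriv_two_oneAddNormSqRpow_apply]
    simp [EuclideanSpace.inner_single_right]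
    ring
  have hstep : oneAddNormSqRpow (a - 1) x = oneAddNormSqRpow (a - 2) x * (1 + ‖x‖ ^ 2) := by
    rw [oneAddNormSqRpow, oneAddNormSqRpow, ← Real.rpow_add_one (one_add_norm_sq_pos x).ne']
    ring_nf
  simp only [laplaceOp, hterm, Finset.sum_add_distrib, Finset.sum_const, Finset.card_univ,
    Fintype.card_fin, nsmul_eq_mul, ← Finset.mul_sum, ← EuclideanSpace.real_norm_sq_eq,
    Pi.sub_apply, Pi.smul_apply, smul_eq_mul]
  linear_combination (-(4 * a * (a - 1))) * hstep

lemma laplaceOp_mem_oneAddNormSqRpowSpan {b : ℝ} {f : EuclideanSpace ℝ (Fin n) → ℝ}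
    (hf : f ∈ oneAddNormSqRpowSpan _ b) : laplaceOp n f ∈ oneAddNormSqRpowSpan _ (b - 1) := by
  induction hf using span_induction with
  | mem _ hg =>
    obtain ⟨a, ha, rfl⟩ := hg
    have hmem : ∀ a' ≤ b - 1,
        oneAddNormSqRpow (E := EuclideanSpace ℝ (Fin n)) a' ∈ oneAddNormSqRpowSpan _ (b - 1) :=
      fun a' ha' => subset_span ⟨a', ha', rfl⟩
    rw [laplaceOp_oneAddNormSqRpow]
    exact sub_mem (smul_mem _ _ (hmem _ (by linarith [ha.out])))
      (smul_mem _ _ (hmem _ (by linarith [ha.out])))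
  | zero =>
    rw [laplaceOp_zero]
    exact zero_mem _
  | add f g hf hg hΔf hΔg =>
    rw [laplaceOp_add (contDiff_of_mem_oneAddNormSqRpowSpan hf)
      (contDiff_of_mem_oneAddNormSqRpowSpan hg)]
    exact add_mem hΔf hΔg
  | smul c f hf hΔf =>
    rw [laplaceOp_const_smul c (contDiff_of_mem_oneAddNormSqRpowSpan hf)]
    exact smul_mem _ c hΔf

lemma laplaceOp_iterate_mem_oneAddNormSqRpowSpan (k : ℕ) {b : ℝ}
    {f : EuclideanSpace ℝ (Fin n) → ℝ} (hf : f ∈ oneAddNormSqRpowSpan _ b) :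
    (laplaceOp n)^[k] f ∈ oneAddNormSqRpowSpan _ (b - k) := by
  induction k with
  | zero => simpa using hf
  | succ k ih =>
    rw [Function.iterate_succ_apply', Nat.cast_succ, ← sub_sub]
    exact laplaceOp_mem_oneAddNormSqRpowSpan ih

end Laplacian

theorem stmt_19_general (n γ : ℕ) (r : ℝ) :
    ∃ C : ℝ, 0 < C ∧ ∀ x : EuclideanSpace ℝ (Fin n),
      |(laplaceOp n)^[γ] (fun y => (1 + ‖y‖ ^ 2) ^ (-(r / 2))) x|
        ≤ C * (1 + ‖x‖ ^ 2) ^ (-((r + 2 * (γ : ℝ)) / 2)) := by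
  have hf : oneAddNormSqRpow (-(r / 2)) ∈ oneAddNormSqRpowSpan (EuclideanSpace ℝ (Fin n)) _ :=
    subset_span ⟨-(r / 2), Set.mem_Iic.mpr le_rfl, rfl⟩
  obtain ⟨C, hC, hbound⟩ :=
    exists_abs_le_of_mem_oneAddNormSqRpowSpan (laplaceOp_iterate_mem_oneAddNormSqRpowSpan γ hf)
  refine ⟨C, hC, fun x => (hbound x).trans_eq ?_⟩
  rw [oneAddNormSqRpow]
  ring_nf

/-- Integer-order case of Lemma 4.1: for `r > n` and `f(x) = (1+|x|²)^{−r/2}`, the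
`γ`-fold iterated Laplacian of `f` is bounded by `C·(1+|x|²)^{−(r+2γ)/2}`. -/
theorem stmt_19 (n γ : ℕ) (hn : 0 < n) (hγ : 0 < γ) (r : ℝ) (hr : (n : ℝ) < r) :
    ∃ C : ℝ, 0 < C ∧ ∀ x : EuclideanSpace ℝ (Fin n),
      |(laplaceOp n)^[γ] (fun y => (1 + ‖y‖ ^ 2) ^ (-(r / 2))) x|
        ≤ C * (1 + ‖x‖ ^ 2) ^ (-((r + 2 * (γ : ℝ)) / 2)) :=
  stmt_19_general n γ r
end
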